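/- Let M = [a,b) and N = [c,d) be interval modules with 0 ≤ a < b ≤ c < d (disjoint supports with M below N). Then S_{M,N} = [max{c−a, d−b}, d−a) and S_{N,M} = ∅. -/

import Mathlib

open scoped NNReal

/-- A persistence module: a functor from `[0,∞)` to real vector spaces. -/
structure PM where
  V : ℝ≥0 → Type
  [grp : ∀ x, AddCommGroup (V x)]
  [mod : ∀ x, Module ℝ (V x)]
  map : ∀ {x y : ℝ≥0}, x ≤ y → (V x →ₗ[ℝ] V y)
  map_id : ∀ x : ℝ≥0, map (le_refl x) = LinearMap.id
  map_comp : ∀ {x y z : ℝ≥0} (h1 : x ≤ y) (h2 : y ≤ z),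
    (map h2).comp (map h1) = map (h1.trans h2)

attribute [instance] PM.grp PM.mod

/-- A morphism of persistence modules. -/
structure PM.Hom (M N : PM) where
  app : ∀ x : ℝ≥0, M.V x →ₗ[ℝ] N.V x
  comm : ∀ {x y : ℝ≥0} (h : x ≤ y), (app y).comp (M.map h) = (N.map h).comp (app x)

/-- The shifted module `M·ε`. -/
def PM.shift (M : PM) (ε : ℝ≥0) : PM where
  V x := M.V (x + ε)
  grp x := inferInstance
  mod x := inferInstance
  map h := M.map (add_le_add h (le_refl ε))
  map_id x := M.map_id (x + ε)
  map_comp h1 h2 := M.map_comp _ _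

noncomputable def intervalSub (α β : ℝ) (x : ℝ≥0) : Submodule ℝ ℝ :=
  if α ≤ (x : ℝ) ∧ (x : ℝ) < β then ⊤ else ⊥

/-- The interval module `[α,β)`. -/
noncomputable def intervalModule (α β : ℝ) : PM where
  V x := ↥(intervalSub α β x)
  grp x := inferInstance
  mod x := inferInstance
  map {x y} h := LinearMap.codRestrict _
      ((if α ≤ (x : ℝ) ∧ (y : ℝ) < β then (1 : ℝ) else 0) • (intervalSub α β x).subtype)
      (by
        intro v
        by_cases hy : α ≤ (y : ℝ) ∧ (y : ℝ) < β
        · simp [intervalSub, hy]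
        · have hc : ¬(α ≤ (x : ℝ) ∧ (y : ℝ) < β) := by
            intro hc
            exact hy ⟨le_trans hc.1 (by exact_mod_cast h), hc.2⟩
          simp [intervalSub, hy, hc]
          first
            | exact LinearMap.congr_fun (zero_smul ℝ _) v
            | simp)
  map_id x := by
    ext v
    by_cases hx : α ≤ (x : ℝ) ∧ (x : ℝ) < β
    · simp [hx]
    · have hv : (v : ℝ) = 0 := by
        have h2 := v.2
        simp only [intervalSub, if_neg hx, Submodule.mem_bot] at h2
        exact h2
      simp [hx, hv]
  map_comp {x y z} h1 h2 := by
    ext v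
    by_cases hC : α ≤ (x : ℝ) ∧ (z : ℝ) < β
    · have hA : α ≤ (x : ℝ) ∧ (y : ℝ) < β :=
        ⟨hC.1, lt_of_le_of_lt (by exact_mod_cast h2) hC.2⟩
      have hB : α ≤ (y : ℝ) ∧ (z : ℝ) < β :=
        ⟨le_trans hC.1 (by exact_mod_cast h1), hC.2⟩
      simp [hA, hB, hC]
    · rcases not_and_or.mp hC with hx | hz
      · have hA : ¬(α ≤ (x : ℝ) ∧ (y : ℝ) < β) := fun h => hx h.1
        simp [hA, hC]
        split_ifs <;> simp
      · have hB : ¬(α ≤ (y : ℝ) ∧ (z : ℝ) < β) := fun h => hz h.2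
        simp [hB, hC]

/-- `Hom(M,N) ≠ {0}`: there is a nonzero morphism from `M` to `N`. -/
def HomNeZero (M N : PM) : Prop := ∃ F : PM.Hom M N, ∃ x, F.app x ≠ 0

/-- `S_{M,N} = {x ≥ 0 : Hom(M, N·x) ≠ {0}}`. -/
noncomputable def Sset (M N : PM) : Set ℝ :=
  {x : ℝ | 0 ≤ x ∧ HomNeZero M (N.shift x.toNNReal)}

/-- The canonical morphism `Π_M^{M·τ} : M → M·τ`. -/
def PM.pi (M : PM) (τ : ℝ≥0) : M.Hom (M.shift τ) where
  app x := M.map le_self_add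
  comm {x y} h := by
    show (M.map le_self_add).comp (M.map h) =
      (M.map (add_le_add h (le_refl τ))).comp (M.map le_self_add)
    rw [M.map_comp, M.map_comp]

/-- The pair `(Φ, Ψ)` is an `ε`-interleaving between `M` and `N`:
`(Ψ·ε) ∘ Φ = Π_M^{M·2ε}` and `(Φ·ε) ∘ Ψ = Π_N^{N·2ε}` (expressed pointwise). -/
def IsInterleaving (M N : PM) (ε : ℝ≥0)
    (Φ : M.Hom (N.shift ε)) (Ψ : N.Hom (M.shift ε)) : Prop :=
  (∀ x : ℝ≥0, (Ψ.app (x + ε)).comp (Φ.app x) =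
      M.map (le_self_add.trans le_self_add : x ≤ x + ε + ε)) ∧
  (∀ x : ℝ≥0, (Φ.app (x + ε)).comp (Ψ.app x) =
      N.map (le_self_add.trans le_self_add : x ≤ x + ε + ε))

/-! The structure maps of `[a,b)` out of time `a` are surjective, so a morphism out of `[a,b)` is
determined by the image of the generator at `a`. In `[c,d)·ε` that image must be alive at time `a`
(`c ≤ a + ε < d`) and, by naturality, dead by time `b`, where the generator dies (`d ≤ b + ε`);
conversely, under these inequalities "the identity where both modules live" is a nonzero
morphism. For `[c,d) → [a,b)·ε` the same analysis demands `c + ε < b`, impossible when `b ≤ c`. -/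

namespace intervalModule

variable {a b c d : ℝ} {ε : ℝ≥0}

lemma le_and_lt_of_ne_zero {x : ℝ≥0} {v : (intervalModule a b).V x} (hv : v ≠ 0) :
    a ≤ x ∧ (x : ℝ) < b := by
  by_contra hx
  have hmem : v.val ∈ (⊥ : Submodule ℝ ℝ) := (show intervalSub a b x = ⊥ from if_neg hx) ▸ v.2
  exact hv (Subtype.ext (Submodule.mem_bot ℝ |>.1 hmem))

lemma map_val {x y : ℝ≥0} (h : x ≤ y) (v : (intervalModule a b).V x) :
    ((intervalModule a b).map h v).val = if a ≤ x ∧ (y : ℝ) < b then v.val else 0 := by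
  show (if a ≤ (x : ℝ) ∧ (y : ℝ) < b then (1 : ℝ) else 0) * v.val = _
  split_ifs <;> simp

lemma map_eq_zero_of_le {x y : ℝ≥0} (h : x ≤ y) (hy : b ≤ y) : (intervalModule a b).map h = 0 :=
  LinearMap.ext fun v => Subtype.ext <| by
    rw [map_val, if_neg fun hxy => hy.not_gt hxy.2]; rfl

lemma map_ne_zero {x y : ℝ≥0} (h : x ≤ y) {v : (intervalModule a b).V x} (hv : v ≠ 0)
    (hy : (y : ℝ) < b) : (intervalModule a b).map h v ≠ 0 := fun h0 =>
  hv <| Subtype.ext <| by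
    have hval := map_val h v
    rw [h0, if_pos ⟨(le_and_lt_of_ne_zero hv).1, hy⟩] at hval
    exact hval.symm

lemma map_toNNReal_surjective {x : ℝ≥0} (h : a.toNNReal ≤ x) :
    Function.Surjective ((intervalModule a b).map h) := by
  intro v
  by_cases hv : v = 0
  · exact ⟨0, by rw [hv, map_zero]⟩
  obtain ⟨hax, hxb⟩ := le_and_lt_of_ne_zero hv
  have ha : a ≤ a.toNNReal := Real.le_coe_toNNReal a
  have hmem : v.val ∈ intervalSub a b a.toNNReal := by
    rw [show intervalSub a b a.toNNReal = ⊤ from if_pos ⟨ha, (NNReal.coe_le_coe.2 h).trans_lt hxb⟩]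
    trivial
  exact ⟨⟨v.val, hmem⟩, Subtype.ext <| (map_val h _).trans (if_pos ⟨ha, hxb⟩)⟩

lemma mem_intervalSub_shift (hca : c ≤ a + ε) {x : ℝ≥0} (r : ℝ) :
    (if a ≤ (x : ℝ) ∧ (x : ℝ) + ε < d then (1 : ℝ) else 0) * r ∈ intervalSub c d (x + ε) := by
  split_ifs with hx
  · have hlive : c ≤ ((x + ε : ℝ≥0) : ℝ) ∧ ((x + ε : ℝ≥0) : ℝ) < d := by
      push_cast
      exact ⟨by linarith, hx.2⟩
    rw [show intervalSub c d (x + ε) = ⊤ from if_pos hlive]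
    trivial
  · rw [zero_mul]; exact Submodule.zero_mem _

noncomputable def homShift (hca : c ≤ a + ε) (hdb : d ≤ b + ε) :
    (intervalModule a b).Hom ((intervalModule c d).shift ε) where
  app x := LinearMap.codRestrict _
    ((if a ≤ (x : ℝ) ∧ (x : ℝ) + ε < d then (1 : ℝ) else 0) • (intervalSub a b x).subtype)
    fun v => mem_intervalSub_shift hca v.val
  comm {x y} h := by
    refine LinearMap.ext fun v => Subtype.ext ?_
    show (if a ≤ (y : ℝ) ∧ (y : ℝ) + ε < d then (1 : ℝ) else 0) *
        ((if a ≤ (x : ℝ) ∧ (y : ℝ) < b then (1 : ℝ) else 0) * v.val) =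
      (if c ≤ ((x + ε : ℝ≥0) : ℝ) ∧ ((y + ε : ℝ≥0) : ℝ) < d then (1 : ℝ) else 0) *
        ((if a ≤ (x : ℝ) ∧ (x : ℝ) + ε < d then (1 : ℝ) else 0) * v.val)
    simp only [NNReal.coe_add]
    have hxy : (x : ℝ) ≤ y := h
    by_cases hax : a ≤ (x : ℝ)
    · by_cases hyd : (y : ℝ) + ε < d
      · have hyb : (y : ℝ) < b := by linarith
        have hcx : c ≤ (x : ℝ) + ε := by linarith
        have hxd : (x : ℝ) + ε < d := by linarith
        simp [hax, hyd, hyb, hcx, hxd, hax.trans hxy]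
      · simp [hyd]
    · simp [hax]

end intervalModule

lemma PM.Hom.app_eq_zero_of_app_toNNReal_eq_zero {a b : ℝ} {N : PM}
    (F : (intervalModule a b).Hom N) (h : F.app a.toNNReal = 0) (x : ℝ≥0) : F.app x = 0 := by
  ext v
  by_cases hx : a.toNNReal ≤ x
  · obtain ⟨w, rfl⟩ := intervalModule.map_toNNReal_surjective hx v
    rw [← LinearMap.comp_apply, F.comm, LinearMap.comp_apply, h]
    simp
  · have hv : v = 0 := by
      by_contra hv
      exact hx (Real.toNNReal_le_iff_le_coe.2 (intervalModule.le_and_lt_of_ne_zero hv).1)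
    simp [hv]

lemma HomNeZero.intervalModule_shift_bounds {a b c d : ℝ} {ε : ℝ≥0} (ha : 0 ≤ a)
    (H : HomNeZero (intervalModule a b) ((intervalModule c d).shift ε)) :
    c ≤ a + ε ∧ a + ε < d ∧ d ≤ b + ε := by
  obtain ⟨F, x, hFx⟩ := H
  have hF : F.app a.toNNReal ≠ 0 := fun h => hFx (F.app_eq_zero_of_app_toNNReal_eq_zero h x)
  obtain ⟨w, hw⟩ := DFunLike.ne_iff.1 hF
  have hw0 : w ≠ 0 := by rintro rfl; exact hw (map_zero _)
  have hab : a < b :=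
    (Real.le_coe_toNNReal a).trans_lt (intervalModule.le_and_lt_of_ne_zero hw0).2
  have hab' : a.toNNReal ≤ b.toNNReal := Real.toNNReal_le_toNNReal hab.le
  obtain ⟨hca, had⟩ := intervalModule.le_and_lt_of_ne_zero (a := c) (b := d) hw
  rw [NNReal.coe_add, Real.coe_toNNReal a ha] at hca had
  refine ⟨hca, had, not_lt.1 fun hbd => ?_⟩
  have hdie : (intervalModule c d).map (add_le_add hab' le_rfl) (F.app a.toNNReal w) = 0 := by
    have := LinearMap.congr_fun (F.comm hab') w
    rw [LinearMap.comp_apply, intervalModule.map_eq_zero_of_le hab' (Real.le_coe_toNNReal b),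
      LinearMap.zero_apply, map_zero, LinearMap.comp_apply] at this
    exact this.symm
  refine intervalModule.map_ne_zero _ hw ?_ hdie
  rwa [NNReal.coe_add, Real.coe_toNNReal b (ha.trans hab.le)]

lemma homNeZero_intervalModule_shift {a b c d : ℝ} {ε : ℝ≥0} (ha : 0 ≤ a) (hab : a < b)
    (hca : c ≤ a + ε) (had : a + ε < d) (hdb : d ≤ b + ε) :
    HomNeZero (intervalModule a b) ((intervalModule c d).shift ε) := by
  have ha' : ((a.toNNReal : ℝ≥0) : ℝ) = a := Real.coe_toNNReal a ha
  have hmem : (1 : ℝ) ∈ intervalSub a b a.toNNReal := by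
    rw [show intervalSub a b a.toNNReal = ⊤ from if_pos ⟨ha'.ge, ha'.trans_lt hab⟩]
    trivial
  refine ⟨intervalModule.homShift hca hdb, a.toNNReal, fun h0 => ?_⟩
  have happ := congrArg Subtype.val (LinearMap.congr_fun h0 ⟨1, hmem⟩)
  change (if a ≤ (a.toNNReal : ℝ) ∧ (a.toNNReal : ℝ) + ε < d then (1 : ℝ) else 0) * 1 = 0 at happ
  simp [ha', had] at happ

lemma homNeZero_intervalModule_shift_iff {a b c d : ℝ} {ε : ℝ≥0} (ha : 0 ≤ a) (hab : a < b) :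
    HomNeZero (intervalModule a b) ((intervalModule c d).shift ε) ↔
      c ≤ a + ε ∧ a + ε < d ∧ d ≤ b + ε :=
  ⟨HomNeZero.intervalModule_shift_bounds ha, fun ⟨hca, had, hdb⟩ =>
    homNeZero_intervalModule_shift ha hab hca had hdb⟩

theorem stmt15_general (a b c d : ℝ) (ha : 0 ≤ a) (hab : a < b) (hbc : b ≤ c) :
    Sset (intervalModule a b) (intervalModule c d) = Set.Ico (max (c - a) (d - b)) (d - a) ∧
    Sset (intervalModule c d) (intervalModule a b) = ∅ := by
  constructor
  · ext s
    simp only [Sset, Set.mem_ofPred_eq, Set.mem_Ico, max_le_iff]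
    constructor
    · rintro ⟨hs, H⟩
      rw [homNeZero_intervalModule_shift_iff ha hab, Real.coe_toNNReal s hs] at H
      exact ⟨⟨by linarith, by linarith⟩, by linarith⟩
    · rintro ⟨⟨hca, hdb⟩, had⟩
      have hs : 0 ≤ s := by linarith
      rw [homNeZero_intervalModule_shift_iff ha hab, Real.coe_toNNReal s hs]
      exact ⟨hs, by linarith, by linarith, by linarith⟩
  · refine Set.eq_empty_of_forall_notMem fun s ⟨_, H⟩ => ?_
    obtain ⟨-, hcb, -⟩ := H.intervalModule_shift_bounds (ha.trans (hab.le.trans hbc))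
    linarith [s.toNNReal.coe_nonneg]

theorem stmt15 (a b c d : ℝ) (ha : 0 ≤ a) (hab : a < b) (hbc : b ≤ c) (hcd : c < d) :
    Sset (intervalModule a b) (intervalModule c d) = Set.Ico (max (c - a) (d - b)) (d - a) ∧
    Sset (intervalModule c d) (intervalModule a b) = ∅ :=
  stmt15_general a b c d ha hab hbc
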